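/- arXiv:1007.0231 — 3 statements merged into one kernel-verified Lean document; each statement's English description precedes it below -/
import Mathlib

section
/- Almost-orthogonality of wave packets with separated frequencies: Let c > 0 and let C₀, C₁, C₂ ≥ 0. There is a constant C such that the following holds for every λ ≥ 1. Suppose (p_k)_{k∈ℤ} is a finitely supported family of complex numbers, (ω_k)_{k∈ℤ} is a family of real numbers satisfying |ω_k − ω_ℓ| ≥ c λ^{−1/2} |k−ℓ| whenever |k−ℓ| ≥ 2, and for each k, ρ_k : ℝ → ℂ is a twice continuously differentiable function supported in {τ : |τ| ≤ λ^{−1/2}} with |ρ_k^{(m)}(τ)| ≤ C_m λ^{m/2} for m = 0, 1, 2 and all τ. Then λ^{1/2} ∫_ℝ | Σ_{k∈ℤ} e^{iλ ω_k τ} ρ_k(τ) p_k |² dτ ≤ C Σ_{k∈ℤ} |p_k|². -/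
/-!
Expanding the square, the left side is `Σ_{k,l} p_k conj(p_l) λ^{1/2} J_{kl}` with
`J_{kl} = ∫ e^{iλ(ω_k - ω_l)τ} ρ_k(τ) conj(ρ_l(τ)) dτ`. The support and size of the `ρ_k` give
`λ^{1/2} |J_{kl}| ≤ 2 C₀²`; for `|k - l| ≥ 2` two integrations by parts gain
`(λ |ω_k - ω_l|)^{-2} ≤ (c² λ (k - l)²)^{-1}` against `∫ |(ρ_k conj ρ_l)''| ≲ λ^{1/2}`, so
`λ^{1/2} |J_{kl}| ≲ (k - l)^{-2}`. The matrix `λ^{1/2} |J_{kl}|` is thus dominated by a summable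
Toeplitz kernel, and Schur's test bounds the quadratic form by its row sum times `Σ |p_k|²`.
-/

open MeasureTheory Metric Function Complex Real FourierTransform ComplexConjugate

lemma integral_norm_le_of_support_subset_closedBall {E : Type*} [NormedAddCommGroup E]
    {f : ℝ → E} {R A : ℝ} (hR : 0 ≤ R) (hf : support f ⊆ closedBall 0 R)
    (hA : ∀ x, ‖f x‖ ≤ A) : ∫ x, ‖f x‖ ≤ 2 * R * A := by
  have hsupp : ∀ x ∉ closedBall (0 : ℝ) R, ‖f x‖ = 0 := fun x hx ↦ by
    rw [notMem_support.mp (fun h ↦ hx (hf h)), norm_zero]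
  rw [← setIntegral_eq_integral_of_forall_compl_eq_zero hsupp]
  calc ∫ x in closedBall 0 R, ‖f x‖ ≤ ‖∫ x in closedBall 0 R, ‖f x‖‖ := le_abs_self _
    _ ≤ A * volume.real (closedBall (0 : ℝ) R) :=
      norm_setIntegral_le_of_norm_le_const measure_closedBall_lt_top fun x _ ↦ by simpa using hA x
    _ = 2 * R * A := by rw [Real.volume_real_closedBall hR]; ring

lemma hasCompactSupport_of_support_subset_closedBall {E : Type*} [Zero E] {f : ℝ → E} {R : ℝ}
    (hf : support f ⊆ closedBall 0 R) : HasCompactSupport f :=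
  (isCompact_closedBall 0 R).of_isClosed_subset (isClosed_tsupport f)
    (closure_minimal hf isClosed_closedBall)

/- Integrating by parts twice, i.e. `𝓕 g'' = (2πiw)² 𝓕 g`, evaluated at the frequency
`w = -a / 2π` at which `𝓕 g w` is the integral on the left. -/
lemma norm_integral_exp_mul_le {g : ℝ → ℂ} (hg : ContDiff ℝ 2 g) (hgc : HasCompactSupport g)
    {a : ℝ} (ha : a ≠ 0) :
    ‖∫ τ, exp (I * ↑(a * τ)) * g τ‖ ≤ (∫ τ, ‖deriv (deriv g) τ‖) / a ^ 2 := by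
  set w := -(a / (2 * π))
  have hfourier : ∫ τ, exp (I * ↑(a * τ)) * g τ = 𝓕 g w := by
    rw [Real.fourier_real_eq_integral_exp_smul]
    congr 1 with τ
    rw [smul_eq_mul, mul_comm I]
    congr 3
    simp only [w]
    field_simp
  have hcs : ∀ n, HasCompactSupport (iteratedDeriv n g) := fun n ↦ by
    induction n with
    | zero => simpa
    | succ n ih => rw [iteratedDeriv_succ]; exact ih.deriv
  have hint : ∀ n : ℕ, n ≤ (2 : ℕ∞) → Integrable (iteratedDeriv n g) := fun n hn ↦
    (hg.continuous_iteratedDeriv n (mod_cast hn)).integrable_of_hasCompactSupport (hcs n)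
  have hderiv := congrFun (Real.fourier_iteratedDeriv hg hint le_rfl) w
  have hnorm : ‖2 * (π : ℂ) * I * w‖ = |a| := by
    simp [w, abs_of_pos pi_pos]
    field_simp
  rw [iteratedDeriv_succ, iteratedDeriv_one] at hderiv
  rw [hfourier, le_div_iff₀ (by positivity), mul_comm, ← sq_abs, ← hnorm, ← norm_pow,
    ← norm_smul, ← hderiv]
  exact VectorFourier.norm_fourierIntegral_le_integral_norm _ _ _ _ _

lemma deriv_deriv_mul_conj {f g : ℝ → ℂ} (hf : ContDiff ℝ 2 f) (hg : ContDiff ℝ 2 g) (τ : ℝ) :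
    deriv (deriv fun t ↦ f t * conj (g t)) τ = deriv (deriv f) τ * conj (g τ) +
      2 * (deriv f τ * conj (deriv g τ)) + f τ * conj (deriv (deriv g) τ) := by
  have hf' : ContDiff ℝ 1 (deriv f) := hf.iterate_deriv' 1 1
  have hg' : ContDiff ℝ 1 (deriv g) := hg.iterate_deriv' 1 1
  have hfd := hf.differentiable two_ne_zero
  have hgd := hg.differentiable two_ne_zero
  have hd : deriv (fun t ↦ f t * conj (g t)) =
      fun t ↦ deriv f t * conj (g t) + f t * conj (deriv g t) :=
    funext fun t ↦ ((hfd t).hasDerivAt.mul (hgd t).hasDerivAt.star).deriv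
  have h2 : HasDerivAt (fun t ↦ deriv f t * conj (g t) + f t * conj (deriv g t))
      (deriv (deriv f) τ * conj (g τ) + deriv f τ * conj (deriv g τ) +
        (deriv f τ * conj (deriv g τ) + f τ * conj (deriv (deriv g) τ))) τ :=
    (((hf'.differentiable one_ne_zero) τ).hasDerivAt.mul (hgd τ).hasDerivAt.star).add
      ((hfd τ).hasDerivAt.mul ((hg'.differentiable one_ne_zero) τ).hasDerivAt.star)
  rw [hd, h2.deriv]
  ring

lemma norm_deriv_deriv_mul_conj_le {f g : ℝ → ℂ} {A₀ A₁ A₂ : ℝ} (hf : ContDiff ℝ 2 f)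
    (hg : ContDiff ℝ 2 g) (hf₀ : ∀ τ, ‖f τ‖ ≤ A₀) (hf₁ : ∀ τ, ‖deriv f τ‖ ≤ A₁)
    (hf₂ : ∀ τ, ‖deriv (deriv f) τ‖ ≤ A₂) (hg₀ : ∀ τ, ‖g τ‖ ≤ A₀) (hg₁ : ∀ τ, ‖deriv g τ‖ ≤ A₁)
    (hg₂ : ∀ τ, ‖deriv (deriv g) τ‖ ≤ A₂) (τ : ℝ) :
    ‖deriv (deriv fun t ↦ f t * conj (g t)) τ‖ ≤ 2 * A₀ * A₂ + 2 * A₁ ^ 2 := by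
  have hA₀ : 0 ≤ A₀ := (norm_nonneg _).trans (hf₀ 0)
  have hA₁ : 0 ≤ A₁ := (norm_nonneg _).trans (hf₁ 0)
  have hA₂ : 0 ≤ A₂ := (norm_nonneg _).trans (hf₂ 0)
  rw [deriv_deriv_mul_conj hf hg]
  calc _ ≤ ‖deriv (deriv f) τ‖ * ‖g τ‖ + 2 * (‖deriv f τ‖ * ‖deriv g τ‖) +
        ‖f τ‖ * ‖deriv (deriv g) τ‖ := by
        refine (norm_add₃_le ..).trans_eq ?_
        simp
    _ ≤ A₂ * A₀ + 2 * (A₁ * A₁) + A₀ * A₂ := by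
        gcongr <;> first
          | exact hf₀ τ | exact hf₁ τ | exact hf₂ τ | exact hg₀ τ | exact hg₁ τ | exact hg₂ τ
    _ = 2 * A₀ * A₂ + 2 * A₁ ^ 2 := by ring

lemma integral_norm_sum_sq_eq {ι α : Type*} [MeasurableSpace α] {μ : Measure α} (s : Finset ι)
    {F : ι → α → ℂ} (hF : ∀ k ∈ s, ∀ l ∈ s, Integrable (fun x ↦ F k x * conj (F l x)) μ) :
    ∫ x, ‖∑ k ∈ s, F k x‖ ^ 2 ∂μ = ∑ k ∈ s, ∑ l ∈ s, (∫ x, F k x * conj (F l x) ∂μ).re := by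
  have hsq : ∀ x, ‖∑ k ∈ s, F k x‖ ^ 2 = (∑ k ∈ s, ∑ l ∈ s, F k x * conj (F l x)).re := fun x ↦ by
    rw [← Finset.sum_mul_sum, ← map_sum, RCLike.mul_conj]
    norm_cast
  simp_rw [hsq]
  refine (integral_re (integrable_finsetSum _ fun k hk ↦ integrable_finsetSum _ (hF k hk))).trans ?_
  rw [integral_finsetSum _ fun k hk ↦ integrable_finsetSum _ (hF k hk), RCLike.re_to_complex,
    re_sum]
  refine Finset.sum_congr rfl fun k hk ↦ ?_
  rw [integral_finsetSum _ (hF k hk), re_sum]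

lemma sum_sum_mul_le_tsum_mul_sum_sq {G : Type*} [AddGroup G] (s : Finset G) (a φ : G → ℝ)
    (hφ0 : ∀ n, 0 ≤ φ n) (hφ : Summable φ) :
    ∑ k ∈ s, ∑ l ∈ s, a k * a l * φ (k - l) ≤ (∑' n, φ n) * ∑ k ∈ s, a k ^ 2 := by
  have hrow : ∀ k, ∑ l ∈ s, φ (k - l) ≤ ∑' n, φ n := fun k ↦ by
    rw [← (Equiv.subLeft k).tsum_eq φ]
    exact ((Equiv.subLeft k).summable_iff.mpr hφ).sum_le_tsum s fun l _ ↦ hφ0 _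
  have hcol : ∀ l, ∑ k ∈ s, φ (k - l) ≤ ∑' n, φ n := fun l ↦ by
    rw [← (Equiv.subRight l).tsum_eq φ]
    exact ((Equiv.subRight l).summable_iff.mpr hφ).sum_le_tsum s fun k _ ↦ hφ0 _
  have hleft : ∑ k ∈ s, ∑ l ∈ s, a k ^ 2 * φ (k - l) ≤ (∑' n, φ n) * ∑ k ∈ s, a k ^ 2 := by
    calc ∑ k ∈ s, ∑ l ∈ s, a k ^ 2 * φ (k - l) = ∑ k ∈ s, a k ^ 2 * ∑ l ∈ s, φ (k - l) := by
          simp_rw [Finset.mul_sum]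
      _ ≤ ∑ k ∈ s, a k ^ 2 * ∑' n, φ n :=
          Finset.sum_le_sum fun k _ ↦ mul_le_mul_of_nonneg_left (hrow k) (sq_nonneg _)
      _ = (∑' n, φ n) * ∑ k ∈ s, a k ^ 2 := by rw [← Finset.sum_mul, mul_comm]
  have hright : ∑ k ∈ s, ∑ l ∈ s, a l ^ 2 * φ (k - l) ≤ (∑' n, φ n) * ∑ k ∈ s, a k ^ 2 := by
    rw [Finset.sum_comm]
    calc ∑ l ∈ s, ∑ k ∈ s, a l ^ 2 * φ (k - l) = ∑ l ∈ s, a l ^ 2 * ∑ k ∈ s, φ (k - l) := by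
          simp_rw [Finset.mul_sum]
      _ ≤ ∑ l ∈ s, a l ^ 2 * ∑' n, φ n :=
          Finset.sum_le_sum fun l _ ↦ mul_le_mul_of_nonneg_left (hcol l) (sq_nonneg _)
      _ = (∑' n, φ n) * ∑ k ∈ s, a k ^ 2 := by rw [← Finset.sum_mul, mul_comm]
  calc ∑ k ∈ s, ∑ l ∈ s, a k * a l * φ (k - l)
      ≤ ∑ k ∈ s, ∑ l ∈ s, (a k ^ 2 * φ (k - l) + a l ^ 2 * φ (k - l)) / 2 :=
        Finset.sum_le_sum fun k _ ↦ Finset.sum_le_sum fun l _ ↦ by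
          nlinarith [mul_nonneg (sq_nonneg (a k - a l)) (hφ0 (k - l))]
    _ = (∑ k ∈ s, ∑ l ∈ s, a k ^ 2 * φ (k - l) + ∑ k ∈ s, ∑ l ∈ s, a l ^ 2 * φ (k - l)) / 2 := by
        simp only [← Finset.sum_div, Finset.sum_add_distrib]
    _ ≤ (∑' n, φ n) * ∑ k ∈ s, a k ^ 2 := by linarith

lemma mul_integral_norm_sum_sq_le {G α : Type*} [AddGroup G] [MeasurableSpace α]
    {μ : Measure α} (s : Finset G) {F : G → α → ℂ} {M : ℝ} (a : G → ℝ) {φ : G → ℝ}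
    (hφ0 : ∀ n, 0 ≤ φ n) (hφ : Summable φ)
    (hint : ∀ k l, Integrable (fun x ↦ F k x * conj (F l x)) μ)
    (hcorr : ∀ k l, M * (∫ x, F k x * conj (F l x) ∂μ).re ≤ a k * a l * φ (k - l)) :
    M * ∫ x, ‖∑ k ∈ s, F k x‖ ^ 2 ∂μ ≤ (∑' n, φ n) * ∑ k ∈ s, a k ^ 2 := by
  rw [integral_norm_sum_sq_eq s fun k _ l _ ↦ hint k l, Finset.mul_sum]
  refine (Finset.sum_le_sum fun k _ ↦ ?_).trans (sum_sum_mul_le_tsum_mul_sum_sq s a φ hφ0 hφ)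
  rw [Finset.mul_sum]
  exact Finset.sum_le_sum fun l _ ↦ hcorr k l

lemma exp_mul_mul_conj_exp_mul_mul (lam x y t : ℝ) (u v w z : ℂ) :
    exp (I * ↑(lam * x * t)) * u * v * conj (exp (I * ↑(lam * y * t)) * w * z) =
      v * conj z * (exp (I * ↑(lam * (x - y) * t)) * (u * conj w)) := by
  simp only [map_mul, ← exp_conj, conj_I, conj_ofReal]
  rw [show I * ↑(lam * (x - y) * t) = I * ↑(lam * x * t) + -I * ↑(lam * y * t) by
    push_cast; ring, Complex.exp_add]
  ring

structure IsPacketProfile (R A₀ A₁ A₂ : ℝ) (f : ℝ → ℂ) : Prop where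
  contDiff : ContDiff ℝ 2 f
  support_subset : support f ⊆ closedBall 0 R
  norm_le : ∀ τ, ‖f τ‖ ≤ A₀
  norm_deriv_le : ∀ τ, ‖deriv f τ‖ ≤ A₁
  norm_deriv_deriv_le : ∀ τ, ‖deriv (deriv f) τ‖ ≤ A₂

namespace IsPacketProfile

variable {R A₀ A₁ A₂ : ℝ} {f g : ℝ → ℂ}

lemma support_mul_conj_subset (hf : IsPacketProfile R A₀ A₁ A₂ f) (h : ℝ → ℂ) :
    support (fun τ ↦ h τ * (f τ * conj (g τ))) ⊆ closedBall 0 R := fun _ hτ ↦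
  hf.support_subset (left_ne_zero_of_mul (right_ne_zero_of_mul hτ))

lemma integrable_exp_mul_conj (hf : IsPacketProfile R A₀ A₁ A₂ f)
    (hg : IsPacketProfile R A₀ A₁ A₂ g) (a : ℝ) :
    Integrable fun τ ↦ exp (I * ↑(a * τ)) * (f τ * conj (g τ)) := by
  have := hf.contDiff.continuous
  have := hg.contDiff.continuous
  exact Continuous.integrable_of_hasCompactSupport (by fun_prop)
    (hasCompactSupport_of_support_subset_closedBall (hf.support_mul_conj_subset _))

lemma integrable_exp_mul_mul_conj_exp_mul_mul (hf : IsPacketProfile R A₀ A₁ A₂ f)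
    (hg : IsPacketProfile R A₀ A₁ A₂ g) (lam x y : ℝ) (u v : ℂ) :
    Integrable fun τ ↦
      exp (I * ↑(lam * x * τ)) * f τ * u * conj (exp (I * ↑(lam * y * τ)) * g τ * v) := by
  simp_rw [exp_mul_mul_conj_exp_mul_mul]
  exact (hf.integrable_exp_mul_conj hg _).const_mul _

lemma norm_integral_exp_mul_conj_le (hR : 0 ≤ R) (hf : IsPacketProfile R A₀ A₁ A₂ f)
    (hg : IsPacketProfile R A₀ A₁ A₂ g) (a : ℝ) :
    ‖∫ τ, exp (I * ↑(a * τ)) * (f τ * conj (g τ))‖ ≤ 2 * R * A₀ ^ 2 := by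
  refine (norm_integral_le_integral_norm _).trans <|
    integral_norm_le_of_support_subset_closedBall hR (hf.support_mul_conj_subset _) fun τ ↦ ?_
  rw [norm_mul, norm_exp_I_mul_ofReal, one_mul, norm_mul, RCLike.norm_conj, sq]
  exact mul_le_mul (hf.norm_le τ) (hg.norm_le τ) (norm_nonneg _)
    ((norm_nonneg _).trans (hf.norm_le τ))

lemma norm_integral_exp_mul_conj_le_div (hR : 0 ≤ R) (hf : IsPacketProfile R A₀ A₁ A₂ f)
    (hg : IsPacketProfile R A₀ A₁ A₂ g) {a : ℝ} (ha : a ≠ 0) :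
    ‖∫ τ, exp (I * ↑(a * τ)) * (f τ * conj (g τ))‖ ≤
      2 * R * (2 * A₀ * A₂ + 2 * A₁ ^ 2) / a ^ 2 := by
  set G := fun τ ↦ f τ * conj (g τ)
  have hG : ContDiff ℝ 2 G := hf.contDiff.mul (conjCLE.contDiff.comp hg.contDiff)
  have hGsupp : support G ⊆ closedBall 0 R := by
    simpa [G] using hf.support_mul_conj_subset (g := g) 1
  have hG'' : support (deriv (deriv G)) ⊆ closedBall 0 R :=
    support_deriv_subset.trans <| tsupport_deriv_subset.trans <|
      closure_minimal hGsupp isClosed_closedBall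
  refine (norm_integral_exp_mul_le hG (hasCompactSupport_of_support_subset_closedBall hGsupp)
    ha).trans ?_
  gcongr
  exact integral_norm_le_of_support_subset_closedBall hR hG'' <|
    norm_deriv_deriv_mul_conj_le hf.contDiff hg.contDiff hf.norm_le hf.norm_deriv_le
      hf.norm_deriv_deriv_le hg.norm_le hg.norm_deriv_le hg.norm_deriv_deriv_le

end IsPacketProfile

/- Dominates `λ^{1/2} |J_{kl}|` at `n = k - l`: trivially for neighbours, by non-stationary
phase otherwise. -/
noncomputable def packetKernel (A D : ℝ) (n : ℤ) : ℝ := if |n| ≤ 1 then A else D / (n : ℝ) ^ 2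

lemma packetKernel_nonneg {A D : ℝ} (hA : 0 ≤ A) (hD : 0 ≤ D) (n : ℤ) :
    0 ≤ packetKernel A D n := by
  unfold packetKernel
  split_ifs <;> positivity

lemma summable_packetKernel (A D : ℝ) : Summable (packetKernel A D) := by
  refine (((summable_one_div_int_pow (p := 2)).mpr one_lt_two).mul_left |D|)
    |>.of_norm_bounded_eventually ?_
  filter_upwards [(Set.finite_Icc (-1 : ℤ) 1).compl_mem_cofinite] with n hn
  have hn : ¬ |n| ≤ 1 := fun h ↦ hn (Set.mem_Icc.mpr (abs_le.mp h))
  rw [packetKernel, if_neg hn, norm_div, norm_pow, Real.norm_eq_abs, Real.norm_eq_abs, sq_abs,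
    mul_one_div]

lemma sqrt_mul_norm_integral_exp_mul_conj_le_packetKernel {lam c C₀ C₁ C₂ δ : ℝ} {n : ℤ}
    {f g : ℝ → ℂ} (hlam : 0 < lam) (hc : 0 < c)
    (hf : IsPacketProfile (√lam)⁻¹ C₀ (C₁ * √lam) (C₂ * lam) f)
    (hg : IsPacketProfile (√lam)⁻¹ C₀ (C₁ * √lam) (C₂ * lam) g)
    (hsep : 2 ≤ |n| → c * (√lam)⁻¹ * |(n : ℝ)| ≤ |δ|) :
    √lam * ‖∫ τ, exp (I * ↑(lam * δ * τ)) * (f τ * conj (g τ))‖ ≤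
      packetKernel (2 * C₀ ^ 2) (2 * (2 * C₀ * C₂ + 2 * C₁ ^ 2) / c ^ 2) n := by
  unfold packetKernel
  split_ifs with hn
  · calc √lam * ‖∫ τ, exp (I * ↑(lam * δ * τ)) * (f τ * conj (g τ))‖
        ≤ √lam * (2 * (√lam)⁻¹ * C₀ ^ 2) := by
          gcongr
          exact hf.norm_integral_exp_mul_conj_le (by positivity) hg _
      _ = 2 * C₀ ^ 2 := by field_simp
  · have hC₀ : 0 ≤ C₀ := (norm_nonneg _).trans (hf.norm_le 0)
    have hC₂ : 0 ≤ C₂ :=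
      nonneg_of_mul_nonneg_left ((norm_nonneg _).trans (hf.norm_deriv_deriv_le 0)) hlam
    have hn0 : (n : ℝ) ≠ 0 := Int.cast_ne_zero.mpr (by rintro rfl; simp at hn)
    have hphase : c ^ 2 * lam * n ^ 2 ≤ (lam * δ) ^ 2 := by
      have h := pow_le_pow_left₀ (by positivity) (hsep (by omega)) 2
      calc c ^ 2 * lam * n ^ 2 = lam ^ 2 * (c * (√lam)⁻¹ * |(n : ℝ)|) ^ 2 := by
            rw [mul_pow, mul_pow, inv_pow, sq_sqrt hlam.le, sq_abs]; field_simp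
        _ ≤ lam ^ 2 * |δ| ^ 2 := by gcongr
        _ = (lam * δ) ^ 2 := by rw [sq_abs, mul_pow]
    have hδ : lam * δ ≠ 0 := by
      intro h
      rw [h] at hphase
      have : 0 < c ^ 2 * lam * n ^ 2 := by positivity
      linarith
    calc √lam * ‖∫ τ, exp (I * ↑(lam * δ * τ)) * (f τ * conj (g τ))‖
        ≤ √lam * (2 * (√lam)⁻¹ * (2 * C₀ * (C₂ * lam) + 2 * (C₁ * √lam) ^ 2) / (lam * δ) ^ 2) := by
          gcongr
          exact hf.norm_integral_exp_mul_conj_le_div (by positivity) hg hδ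
      _ = 2 * (2 * C₀ * C₂ + 2 * C₁ ^ 2) * lam / (lam * δ) ^ 2 := by
          rw [mul_pow, sq_sqrt hlam.le]; field_simp
      _ ≤ 2 * (2 * C₀ * C₂ + 2 * C₁ ^ 2) * lam / (c ^ 2 * lam * n ^ 2) := by
          gcongr
      _ = 2 * (2 * C₀ * C₂ + 2 * C₁ ^ 2) / c ^ 2 / n ^ 2 := by field_simp

lemma sqrt_mul_re_integral_exp_mul_mul_conj_exp_mul_mul_le {lam c C₀ C₁ C₂ x y : ℝ} {n : ℤ}
    {f g : ℝ → ℂ} (hlam : 0 < lam) (hc : 0 < c)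
    (hf : IsPacketProfile (√lam)⁻¹ C₀ (C₁ * √lam) (C₂ * lam) f)
    (hg : IsPacketProfile (√lam)⁻¹ C₀ (C₁ * √lam) (C₂ * lam) g)
    (hsep : 2 ≤ |n| → c * (√lam)⁻¹ * |(n : ℝ)| ≤ |x - y|) (u v : ℂ) :
    √lam * (∫ τ, exp (I * ↑(lam * x * τ)) * f τ * u *
        conj (exp (I * ↑(lam * y * τ)) * g τ * v)).re ≤
      ‖u‖ * ‖v‖ * packetKernel (2 * C₀ ^ 2) (2 * (2 * C₀ * C₂ + 2 * C₁ ^ 2) / c ^ 2) n := by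
  simp_rw [exp_mul_mul_conj_exp_mul_mul]
  rw [integral_const_mul]
  calc _ ≤ √lam * ‖u * conj v * ∫ τ, exp (I * ↑(lam * (x - y) * τ)) * (f τ * conj (g τ))‖ := by
        gcongr; exact re_le_norm _
    _ = ‖u‖ * ‖v‖ * (√lam * ‖∫ τ, exp (I * ↑(lam * (x - y) * τ)) * (f τ * conj (g τ))‖) := by
        rw [norm_mul, norm_mul, RCLike.norm_conj]; ring
    _ ≤ _ := by
        gcongr
        exact sqrt_mul_norm_integral_exp_mul_conj_le_packetKernel hlam hc hf hg hsep

theorem almost_orthogonality_wave_packets_general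
    (c : ℝ) (hc : 0 < c) (C₀ C₁ C₂ : ℝ) (h₀ : 0 ≤ C₀) (h₂ : 0 ≤ C₂) :
    ∃ C : ℝ, ∀ lam : ℝ, 1 ≤ lam →
      ∀ p : ℤ → ℂ, (Function.support p).Finite →
      ∀ ω : ℤ → ℝ,
        (∀ k l : ℤ, 2 ≤ |k - l| →
          c * lam ^ (-(1 : ℝ) / 2) * |(k : ℝ) - (l : ℝ)| ≤ |ω k - ω l|) →
      ∀ ρ : ℤ → ℝ → ℂ,
        (∀ k : ℤ, ContDiff ℝ 2 (ρ k)) →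
        (∀ (k : ℤ) (τ : ℝ), lam ^ (-(1 : ℝ) / 2) < |τ| → ρ k τ = 0) →
        (∀ (k : ℤ) (τ : ℝ), ‖ρ k τ‖ ≤ C₀) →
        (∀ (k : ℤ) (τ : ℝ), ‖deriv (ρ k) τ‖ ≤ C₁ * lam ^ ((1 : ℝ) / 2)) →
        (∀ (k : ℤ) (τ : ℝ), ‖deriv (deriv (ρ k)) τ‖ ≤ C₂ * lam) →
        lam ^ ((1 : ℝ) / 2) *
            ∫ τ : ℝ, ‖∑' k : ℤ, Complex.exp (Complex.I * ((lam * ω k * τ : ℝ) : ℂ)) * ρ k τ * p k‖ ^ 2 ≤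
          C * ∑' k : ℤ, ‖p k‖ ^ 2 := by
  set φ := packetKernel (2 * C₀ ^ 2) (2 * (2 * C₀ * C₂ + 2 * C₁ ^ 2) / c ^ 2)
  refine ⟨∑' n, φ n, fun lam hlam p hp ω hω ρ hρ hsupp hρ₀ hρ₁ hρ₂ ↦ ?_⟩
  have hlam0 : 0 < lam := by linarith
  have hsqrt : lam ^ ((1 : ℝ) / 2) = √lam := (sqrt_eq_rpow lam).symm
  have hinv : lam ^ (-(1 : ℝ) / 2) = (√lam)⁻¹ := by rw [neg_div, rpow_neg hlam0.le, hsqrt]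
  rw [hinv] at hω hsupp
  rw [hsqrt] at hρ₁ ⊢
  have hprofile : ∀ k, IsPacketProfile (√lam)⁻¹ C₀ (C₁ * √lam) (C₂ * lam) (ρ k) := fun k ↦
    ⟨hρ k, fun τ hτ ↦ by simpa using not_lt.mp (mt (hsupp k τ) hτ), hρ₀ k, hρ₁ k, hρ₂ k⟩
  have hsep : ∀ k l : ℤ, 2 ≤ |k - l| → c * (√lam)⁻¹ * |((k - l : ℤ) : ℝ)| ≤ |ω k - ω l| := by
    push_cast; exact hω
  have hp0 : ∀ k ∉ hp.toFinset, p k = 0 := fun k hk ↦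
    notMem_support.mp (mt hp.mem_toFinset.mpr hk)
  have hsum : ∀ τ, ∑' k, exp (I * ↑(lam * ω k * τ)) * ρ k τ * p k =
      ∑ k ∈ hp.toFinset, exp (I * ↑(lam * ω k * τ)) * ρ k τ * p k := fun τ ↦
    tsum_eq_sum fun k hk ↦ by simp [hp0 k hk]
  have hpsum : ∑' k, ‖p k‖ ^ 2 = ∑ k ∈ hp.toFinset, ‖p k‖ ^ 2 :=
    tsum_eq_sum fun k hk ↦ by simp [hp0 k hk]
  simp_rw [hsum, hpsum]
  exact mul_integral_norm_sum_sq_le _ (‖p ·‖)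
    (packetKernel_nonneg (by positivity) (by positivity)) (summable_packetKernel _ _)
    (fun k l ↦ (hprofile k).integrable_exp_mul_mul_conj_exp_mul_mul (hprofile l) _ _ _ _ _)
    fun k l ↦ sqrt_mul_re_integral_exp_mul_mul_conj_exp_mul_mul_le hlam0 hc (hprofile k)
      (hprofile l) (hsep k l) _ _

/-- **Almost-orthogonality of wave packets with separated frequencies.** Let `c > 0` and
`C₀, C₁, C₂ ≥ 0`. There is a constant `C` such that for every `λ ≥ 1`, every finitely
supported family `(p_k)_{k∈ℤ}` of complex numbers, every family `(ω_k)_{k∈ℤ}` of reals with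
`|ω_k − ω_ℓ| ≥ c λ^{−1/2} |k−ℓ|` whenever `|k−ℓ| ≥ 2`, and every family of C² functions
`ρ_k` supported in `{|τ| ≤ λ^{−1/2}}` with `|ρ_k^{(m)}(τ)| ≤ C_m λ^{m/2}` for `m = 0,1,2`,
one has `λ^{1/2} ∫ |Σ_k e^{iλω_kτ} ρ_k(τ) p_k|² dτ ≤ C Σ_k |p_k|²`. -/
theorem almost_orthogonality_wave_packets
    (c : ℝ) (hc : 0 < c) (C₀ C₁ C₂ : ℝ) (h₀ : 0 ≤ C₀) (h₁ : 0 ≤ C₁) (h₂ : 0 ≤ C₂) :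
    ∃ C : ℝ, ∀ lam : ℝ, 1 ≤ lam →
      ∀ p : ℤ → ℂ, (Function.support p).Finite →
      ∀ ω : ℤ → ℝ,
        (∀ k l : ℤ, 2 ≤ |k - l| →
          c * lam ^ (-(1 : ℝ) / 2) * |(k : ℝ) - (l : ℝ)| ≤ |ω k - ω l|) →
      ∀ ρ : ℤ → ℝ → ℂ,
        (∀ k : ℤ, ContDiff ℝ 2 (ρ k)) →
        (∀ (k : ℤ) (τ : ℝ), lam ^ (-(1 : ℝ) / 2) < |τ| → ρ k τ = 0) →
        (∀ (k : ℤ) (τ : ℝ), ‖ρ k τ‖ ≤ C₀) →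
        (∀ (k : ℤ) (τ : ℝ), ‖deriv (ρ k) τ‖ ≤ C₁ * lam ^ ((1 : ℝ) / 2)) →
        (∀ (k : ℤ) (τ : ℝ), ‖deriv (deriv (ρ k)) τ‖ ≤ C₂ * lam) →
        lam ^ ((1 : ℝ) / 2) *
            ∫ τ : ℝ, ‖∑' k : ℤ, Complex.exp (Complex.I * ((lam * ω k * τ : ℝ) : ℂ)) * ρ k τ * p k‖ ^ 2 ≤
          C * ∑' k : ℤ, ‖p k‖ ^ 2 :=
  almost_orthogonality_wave_packets_general c hc C₀ C₁ C₂ h₀ h₂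
end

section
/- Two-dimensional calculus estimate: There is a constant C such that for every λ ≥ 1, every real N ≥ 1, and every c₁, c₂ ∈ ℝ, ∫_{{w ∈ ℝ² : w₁ ≥ N λ^{−1/2}}} (1 + λ|w₁² − c₁|)^{−2} (1 + λ|w₂ − c₂|)^{−2} dw ≤ C λ^{−3/2} N^{−1}. -/
/-!
Fubini splits the integral into a product. The `w₂`-factor is `λ⁻¹ M` with
`M = ∫ (1 + |y|)⁻²` by translation and scaling. On `w₁ ≥ a := N λ^{-1/2}` we have `1 ≤ w₁ / a`,
so inserting the Jacobian `2 w₁` of the substitution `u = w₁²` costs at most a factor `(2a)⁻¹`,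
after which the `w₁`-factor is at most `(2a)⁻¹ λ⁻¹ M`. The product is `M² λ^{-3/2} N⁻¹ / 2`.
-/

open MeasureTheory Set

lemma integrable_one_add_mul_abs_sub_rpow_neg {b r : ℝ} (hb : 0 < b) (hr : 1 < r) (c : ℝ) :
    Integrable fun y : ℝ => (1 + b * |y - c|) ^ (-r) := by
  have hbase : Integrable fun t : ℝ => (1 + |t|) ^ (-r) := by
    simpa using integrable_one_add_norm (E := ℝ) (r := r) (by simpa using hr)
  simpa [abs_mul, abs_of_pos hb] using (hbase.comp_mul_left' hb.ne').comp_sub_right c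

lemma integral_one_add_mul_abs_sub_rpow_neg {b : ℝ} (hb : 0 < b) (r c : ℝ) :
    ∫ y : ℝ, (1 + b * |y - c|) ^ (-r) = b⁻¹ * ∫ y : ℝ, (1 + |y|) ^ (-r) := by
  have h := Measure.integral_comp_mul_left (fun t : ℝ => (1 + |t|) ^ (-r)) b
  rw [abs_of_pos (inv_pos.mpr hb), smul_eq_mul] at h
  rw [← h]
  simp_rw [abs_mul, abs_of_pos hb]
  exact integral_sub_right_eq_self (fun t => (1 + b * |t|) ^ (-r)) c

lemma image_sq_Ioi {a : ℝ} (ha : 0 ≤ a) : (fun x : ℝ => x ^ 2) '' Ioi a = Ioi (a ^ 2) := by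
  ext u
  simp only [mem_image, mem_Ioi]
  constructor
  · rintro ⟨x, hx, rfl⟩
    nlinarith
  · intro hu
    refine ⟨√u, ?_, Real.sq_sqrt (by nlinarith)⟩
    simpa [Real.sqrt_sq ha] using Real.sqrt_lt_sqrt (by positivity) hu

lemma hasDerivWithinAt_sq_Ioi (a : ℝ) :
    ∀ x ∈ Ioi a, HasDerivWithinAt (fun x : ℝ => x ^ 2) (2 * x) (Ioi a) x := fun x _ => by
  simpa using (hasDerivAt_pow 2 x).hasDerivWithinAt

lemma injOn_sq_Ioi {a : ℝ} (ha : 0 ≤ a) : InjOn (fun x : ℝ => x ^ 2) (Ioi a) :=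
  (pow_left_strictMonoOn₀ two_ne_zero).injOn.mono fun _ hx => le_trans ha (le_of_lt hx)

lemma integral_Ioi_sq_eq {a : ℝ} (ha : 0 ≤ a) (G : ℝ → ℝ) :
    ∫ u in Ioi (a ^ 2), G u = ∫ x in Ioi a, 2 * x * G (x ^ 2) := by
  rw [← image_sq_Ioi ha, integral_image_eq_integral_abs_deriv_smul measurableSet_Ioi
    (hasDerivWithinAt_sq_Ioi a) (injOn_sq_Ioi ha)]
  refine setIntegral_congr_fun measurableSet_Ioi fun x hx => ?_
  rw [smul_eq_mul, abs_of_pos (by linarith [mem_Ioi.mp hx])]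

lemma integrableOn_Ioi_sq_iff {a : ℝ} (ha : 0 ≤ a) (G : ℝ → ℝ) :
    IntegrableOn (fun x => 2 * x * G (x ^ 2)) (Ioi a) ↔ IntegrableOn G (Ioi (a ^ 2)) := by
  rw [← image_sq_Ioi ha, integrableOn_image_iff_integrableOn_abs_deriv_smul measurableSet_Ioi
    (hasDerivWithinAt_sq_Ioi a) (injOn_sq_Ioi ha)]
  refine integrableOn_congr_fun (fun x hx => ?_) measurableSet_Ioi
  rw [smul_eq_mul, abs_of_pos (by linarith [mem_Ioi.mp hx])]

lemma setIntegral_Ioi_comp_sq_le {a : ℝ} (ha : 0 < a) {G : ℝ → ℝ}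
    (hG : IntegrableOn G (Ioi (a ^ 2))) (hG0 : ∀ u ∈ Ioi (a ^ 2), 0 ≤ G u) :
    ∫ x in Ioi a, G (x ^ 2) ≤ (2 * a)⁻¹ * ∫ u in Ioi (a ^ 2), G u := by
  have hsq : ∀ x ∈ Ioi a, x ^ 2 ∈ Ioi (a ^ 2) := fun x hx =>
    pow_lt_pow_left₀ hx ha.le two_ne_zero
  have hjac : ∀ x ∈ Ioi a, 1 ≤ (2 * a)⁻¹ * (2 * x) := fun x hx =>
    (one_le_inv_mul₀ (by positivity)).mpr (by linarith [mem_Ioi.mp hx])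
  calc ∫ x in Ioi a, G (x ^ 2)
      ≤ ∫ x in Ioi a, (2 * a)⁻¹ * (2 * x * G (x ^ 2)) := by
        refine integral_mono_of_nonneg ?_
          (((integrableOn_Ioi_sq_iff ha.le G).mpr hG).const_mul _) ?_
        · exact (ae_restrict_iff' measurableSet_Ioi).mpr
            (ae_of_all _ fun x hx => hG0 _ (hsq x hx))
        · refine (ae_restrict_iff' measurableSet_Ioi).mpr (ae_of_all _ fun x hx => ?_)
          show G (x ^ 2) ≤ (2 * a)⁻¹ * (2 * x * G (x ^ 2))
          rw [← mul_assoc]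
          exact le_mul_of_one_le_left (hG0 _ (hsq x hx)) (hjac x hx)
    _ = (2 * a)⁻¹ * ∫ u in Ioi (a ^ 2), G u := by
        rw [integral_const_mul, integral_Ioi_sq_eq ha.le]

lemma setIntegral_fst_Ici_mul (a : ℝ) (f g : ℝ → ℝ) :
    ∫ w : ℝ × ℝ in {w | a ≤ w.1}, f w.1 * g w.2 = (∫ x in Ici a, f x) * ∫ y, g y := by
  have hset : {w : ℝ × ℝ | a ≤ w.1} = Ici a ×ˢ univ := by ext; simp
  rw [hset, Measure.volume_eq_prod, setIntegral_prod_mul, Measure.restrict_univ]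

lemma setIntegral_Ici_one_add_mul_abs_sq_sub_rpow_neg_le {a b r : ℝ} (ha : 0 < a) (hb : 0 < b)
    (hr : 1 < r) (c : ℝ) :
    ∫ x in Ici a, (1 + b * |x ^ 2 - c|) ^ (-r) ≤ (2 * a)⁻¹ * (b⁻¹ * ∫ y : ℝ, (1 + |y|) ^ (-r)) := by
  have hG := integrable_one_add_mul_abs_sub_rpow_neg hb hr c
  have hG0 : ∀ u : ℝ, 0 ≤ (1 + b * |u - c|) ^ (-r) := fun u => by positivity
  calc ∫ x in Ici a, (1 + b * |x ^ 2 - c|) ^ (-r)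
      = ∫ x in Ioi a, (1 + b * |x ^ 2 - c|) ^ (-r) := integral_Ici_eq_integral_Ioi
    _ ≤ (2 * a)⁻¹ * ∫ u in Ioi (a ^ 2), (1 + b * |u - c|) ^ (-r) :=
        setIntegral_Ioi_comp_sq_le ha hG.integrableOn fun u _ => hG0 u
    _ ≤ (2 * a)⁻¹ * ∫ u, (1 + b * |u - c|) ^ (-r) := by
        gcongr _ * ?_
        exact setIntegral_le_integral hG (ae_of_all _ hG0)
    _ = (2 * a)⁻¹ * (b⁻¹ * ∫ y : ℝ, (1 + |y|) ^ (-r)) := by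
        rw [integral_one_add_mul_abs_sub_rpow_neg hb]

/-- **Two-dimensional calculus estimate.** There is a constant `C` such that for every
`λ ≥ 1`, every real `N ≥ 1`, and every `c₁, c₂ ∈ ℝ`,
`∫_{w₁ ≥ Nλ^{−1/2}} (1 + λ|w₁² − c₁|)^{−2}(1 + λ|w₂ − c₂|)^{−2} dw ≤ C λ^{−3/2} N^{−1}`. -/
theorem two_dimensional_calculus_estimate :
    ∃ C : ℝ, ∀ lam : ℝ, 1 ≤ lam → ∀ N : ℝ, 1 ≤ N → ∀ c₁ c₂ : ℝ,
      ∫ w : ℝ × ℝ in {w : ℝ × ℝ | N * lam ^ (-(1 : ℝ) / 2) ≤ w.1},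
          (1 + lam * |w.1 ^ 2 - c₁|) ^ (-(2 : ℝ)) * (1 + lam * |w.2 - c₂|) ^ (-(2 : ℝ)) ≤
        C * lam ^ (-(3 : ℝ) / 2) * N⁻¹ := by
  set M := ∫ y : ℝ, (1 + |y|) ^ (-(2 : ℝ))
  have hM : 0 ≤ M := integral_nonneg fun y => by positivity
  refine ⟨M ^ 2 / 2, fun lam hlam N hN c₁ c₂ => ?_⟩
  have hlam0 : 0 < lam := one_pos.trans_le hlam
  have ha : 0 < N * lam ^ (-(1 : ℝ) / 2) := by positivity
  have hpow : lam ^ (-(3 : ℝ) / 2) = (lam ^ (-(1 : ℝ) / 2))⁻¹ * lam⁻¹ ^ 2 := by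
    rw [← Real.rpow_neg hlam0.le, ← Real.rpow_neg_one, ← Real.rpow_natCast,
      ← Real.rpow_mul hlam0.le, ← Real.rpow_add hlam0]
    norm_num
  rw [setIntegral_fst_Ici_mul _ (fun x => (1 + lam * |x ^ 2 - c₁|) ^ (-(2 : ℝ)))
    (fun y => (1 + lam * |y - c₂|) ^ (-(2 : ℝ))), integral_one_add_mul_abs_sub_rpow_neg hlam0]
  calc _ ≤ (2 * (N * lam ^ (-(1 : ℝ) / 2)))⁻¹ * (lam⁻¹ * M) * (lam⁻¹ * M) := by
        gcongr
        exact setIntegral_Ici_one_add_mul_abs_sq_sub_rpow_neg_le ha hlam0 one_lt_two c₁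
    _ = M ^ 2 / 2 * lam ^ (-(3 : ℝ) / 2) * N⁻¹ := by
        rw [hpow]
        ring
end

section
/- One-dimensional calculus estimate: There is a constant C such that for every λ ≥ 1, every real N ≥ 1, and every c₁ ∈ ℝ, ∫_{Nλ^{−1/2}}^{∞} (1 + λ|w² − c₁|)^{−2} dw ≤ C λ^{−1/2} N^{−1}. -/
/-!
For `w ≥ a := N λ^{-1/2}` the factorisation `w² - c = (w + √c)(w - √c)` gives
`|w² - c| ≥ a |w - √c|` (for `c < 0`, where Mathlib's `√c` is `0`, use `|w² - c| ≥ w² ≥ a w`).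
Since `(1 + t)² ≥ 1 + t²`, the integrand is then dominated by the Cauchy-type function
`(1 + (λ a (w - √c))²)⁻¹`, whose integral over all of `ℝ` is `π / (λ a) = π λ^{-1/2} N⁻¹`.
-/

open MeasureTheory Set Real

theorem mul_abs_sub_sqrt_le_abs_sq_sub {a w : ℝ} (ha : 0 ≤ a) (haw : a ≤ w) (c : ℝ) :
    a * |w - √c| ≤ |w ^ 2 - c| := by
  rcases le_or_gt 0 c with hc | hc
  · have hfactor : w ^ 2 - c = (w + √c) * (w - √c) := by
      linear_combination sq_sqrt hc
    rw [hfactor, abs_mul, abs_of_nonneg (by linarith [sqrt_nonneg c] : 0 ≤ w + √c)]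
    gcongr
    linarith [sqrt_nonneg c]
  · rw [sqrt_eq_zero_of_nonpos hc.le, sub_zero, abs_of_nonneg (by linarith : 0 ≤ w),
      abs_of_nonneg (by nlinarith : 0 ≤ w ^ 2 - c)]
    nlinarith

theorem one_add_rpow_neg_two_le_inv_one_add_sq {t u : ℝ} (ht : 0 ≤ t) (htu : t ≤ u) :
    (1 + u) ^ (-2 : ℝ) ≤ (1 + t ^ 2)⁻¹ := by
  rw [rpow_neg (by linarith), rpow_two]
  gcongr
  nlinarith

theorem integrable_inv_one_add_sq_mul_sub {b : ℝ} (hb : b ≠ 0) (s : ℝ) :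
    Integrable fun x : ℝ ↦ (1 + (b * (x - s)) ^ 2)⁻¹ :=
  (integrable_inv_one_add_sq.comp_mul_left' hb).comp_sub_right s

theorem integral_inv_one_add_sq_mul_sub (b s : ℝ) :
    ∫ x : ℝ, (1 + (b * (x - s)) ^ 2)⁻¹ = π / |b| := by
  rw [integral_sub_right_eq_self (fun x ↦ (1 + (b * x) ^ 2)⁻¹) s,
    Measure.integral_comp_mul_left (fun x ↦ (1 + x ^ 2)⁻¹) b, integral_univ_inv_one_add_sq,
    abs_inv, smul_eq_mul, inv_mul_eq_div]

theorem mul_rpow_neg_one_half_eq_inv {x : ℝ} (hx : 0 < x) :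
    x * x ^ (-(1 : ℝ) / 2) = (x ^ (-(1 : ℝ) / 2))⁻¹ := by
  rw [← rpow_neg hx.le, ← rpow_one_add' hx.le] <;> norm_num

theorem one_add_mul_abs_sq_sub_rpow_neg_two_le {lam a w : ℝ} (hlam : 0 ≤ lam) (ha : 0 ≤ a)
    (haw : a ≤ w) (c : ℝ) :
    (1 + lam * |w ^ 2 - c|) ^ (-(2 : ℝ)) ≤ (1 + (lam * a * (w - √c)) ^ 2)⁻¹ := by
  rw [← sq_abs (lam * a * (w - √c))]
  refine one_add_rpow_neg_two_le_inv_one_add_sq (abs_nonneg _) ?_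
  rw [abs_mul, abs_mul, abs_of_nonneg hlam, abs_of_nonneg ha, mul_assoc]
  gcongr
  exact mul_abs_sub_sqrt_le_abs_sq_sub ha haw c

/-- **One-dimensional calculus estimate.** There is a constant `C` such that for every
`λ ≥ 1`, every real `N ≥ 1`, and every `c₁ ∈ ℝ`,
`∫_{Nλ^{−1/2}}^{∞} (1 + λ|w² − c₁|)^{−2} dw ≤ C λ^{−1/2} N^{−1}`. -/
theorem one_dimensional_calculus_estimate :
    ∃ C : ℝ, ∀ lam : ℝ, 1 ≤ lam → ∀ N : ℝ, 1 ≤ N → ∀ c₁ : ℝ,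
      ∫ w in Set.Ici (N * lam ^ (-(1 : ℝ) / 2)),
          (1 + lam * |w ^ 2 - c₁|) ^ (-(2 : ℝ)) ≤
        C * lam ^ (-(1 : ℝ) / 2) * N⁻¹ := by
  refine ⟨π, fun lam hlam N hN c₁ ↦ ?_⟩
  have hlam₀ : 0 < lam := by linarith
  set r := lam ^ (-(1 : ℝ) / 2)
  have hr : 0 < r := rpow_pos_of_pos hlam₀ _
  have hlam_r : lam * r = r⁻¹ := mul_rpow_neg_one_half_eq_inv hlam₀
  clear_value r
  have hb : 0 < lam * (N * r) := by positivity
  have hg := integrable_inv_one_add_sq_mul_sub hb.ne' √c₁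
  calc ∫ w in Ici (N * r), (1 + lam * |w ^ 2 - c₁|) ^ (-(2 : ℝ))
      ≤ ∫ w in Ici (N * r), (1 + (lam * (N * r) * (w - √c₁)) ^ 2)⁻¹ :=
        integral_mono_of_nonneg (.of_forall fun _ ↦ by positivity) hg.integrableOn <|
          ae_restrict_of_forall_mem measurableSet_Ici fun w hw ↦
            one_add_mul_abs_sq_sub_rpow_neg_two_le hlam₀.le (by positivity) hw c₁
    _ ≤ ∫ w, (1 + (lam * (N * r) * (w - √c₁)) ^ 2)⁻¹ :=
        setIntegral_le_integral hg (.of_forall fun _ ↦ by positivity)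
    _ = π * r * N⁻¹ := by
        rw [integral_inv_one_add_sq_mul_sub, abs_of_pos hb, ← mul_assoc, mul_comm lam,
          mul_assoc, hlam_r]
        field_simp
end
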